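/- Fix a real number a with 0 < a < 1 and define, for p, q ∈ (0,1), f(p,q) = log(2p(1−q)) − log( √((1−p)² + 4p²·q(1−q)·(1/a − 1)) − (1−p) ). Then for every p ∈ (0,1) and q ∈ (0,1), the map p ↦ f(p,q) has derivative at p equal to −1 / ( p·√((1−p)² + 4p²·q(1−q)·(1/a − 1)) ). -/

import Mathlib

theorem stmt_9 (a : ℝ) (ha0 : 0 < a) (ha1 : a < 1) :
    ∀ p q : ℝ, 0 < p → p < 1 → 0 < q → q < 1 →
      HasDerivAt (fun x : ℝ => Real.log (2 * x * (1 - q)) -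
          Real.log (Real.sqrt ((1 - x) ^ 2 + 4 * x ^ 2 * q * (1 - q) * (1 / a - 1)) - (1 - x)))
        (-1 / (p * Real.sqrt ((1 - p) ^ 2 + 4 * p ^ 2 * q * (1 - q) * (1 / a - 1)))) p := by
  intro p q hp hp1 hq hq1
  have hq' : 0 < 1 - q := by linarith
  have hc : 0 < 1 / a - 1 := by
    have : 1 < 1 / a := one_lt_one_div ha0 ha1
    linarith
  have hprod : 0 < 4 * p ^ 2 * q * (1 - q) * (1 / a - 1) :=
    mul_pos (mul_pos (mul_pos (mul_pos (by norm_num) (pow_pos hp 2)) hq) hq') hc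
  have hg : 0 < (1 - p) ^ 2 + 4 * p ^ 2 * q * (1 - q) * (1 / a - 1) :=
    add_pos_of_nonneg_of_pos (sq_nonneg _) hprod
  set s := Real.sqrt ((1 - p) ^ 2 + 4 * p ^ 2 * q * (1 - q) * (1 / a - 1)) with hs_def
  have hs_sq : s ^ 2 = (1 - p) ^ 2 + 4 * p ^ 2 * q * (1 - q) * (1 / a - 1) :=
    Real.sq_sqrt hg.le
  have hs_pos : 0 < s := Real.sqrt_pos.mpr hg
  have hs_gt : 1 - p < s := by
    rw [hs_def]
    exact (Real.lt_sqrt (by linarith)).mpr (by linarith)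
  have hh : 0 < s - (1 - p) := by linarith
  have h2pq : 0 < 2 * p * (1 - q) := by positivity
  have hlin : HasDerivAt (fun x : ℝ => 2 * x * (1 - q)) (2 * (1 - q)) p := by
    simpa using ((hasDerivAt_id p).const_mul 2).mul_const (1 - q)
  have h1 : HasDerivAt (fun x : ℝ => Real.log (2 * x * (1 - q)))
      (2 * (1 - q) / (2 * p * (1 - q))) p := hlin.log h2pq.ne'
  have hA : HasDerivAt (fun x : ℝ => (1 - x) ^ 2) (2 * (1 - p) ^ 1 * (0 - 1)) p := by
    exact_mod_cast ((hasDerivAt_const p (1:ℝ)).sub (hasDerivAt_id p)).pow 2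
  have hB : HasDerivAt (fun x : ℝ => 4 * x ^ 2 * q * (1 - q) * (1 / a - 1))
      (4 * (2 * p ^ 1) * q * (1 - q) * (1 / a - 1)) p := by
    exact_mod_cast ((((hasDerivAt_pow 2 p).const_mul 4).mul_const q).mul_const (1 - q)).mul_const
      (1 / a - 1)
  have hgd : HasDerivAt
      (fun x : ℝ => (1 - x) ^ 2 + 4 * x ^ 2 * q * (1 - q) * (1 / a - 1))
      (2 * (1 - p) ^ 1 * (0 - 1) + 4 * (2 * p ^ 1) * q * (1 - q) * (1 / a - 1)) p := hA.add hB
  have hsq : HasDerivAt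
      (fun x : ℝ => Real.sqrt ((1 - x) ^ 2 + 4 * x ^ 2 * q * (1 - q) * (1 / a - 1)))
      ((2 * (1 - p) ^ 1 * (0 - 1) + 4 * (2 * p ^ 1) * q * (1 - q) * (1 / a - 1)) / (2 * s)) p :=
    hgd.sqrt hg.ne'
  have hden : HasDerivAt
      (fun x : ℝ => Real.sqrt ((1 - x) ^ 2 + 4 * x ^ 2 * q * (1 - q) * (1 / a - 1)) - (1 - x))
      ((2 * (1 - p) ^ 1 * (0 - 1) + 4 * (2 * p ^ 1) * q * (1 - q) * (1 / a - 1)) / (2 * s) - (0 - 1))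
      p := hsq.sub ((hasDerivAt_const p (1:ℝ)).sub (hasDerivAt_id p))
  have h2 : HasDerivAt
      (fun x : ℝ => Real.log (Real.sqrt ((1 - x) ^ 2 + 4 * x ^ 2 * q * (1 - q) * (1 / a - 1)) - (1 - x)))
      (((2 * (1 - p) ^ 1 * (0 - 1) + 4 * (2 * p ^ 1) * q * (1 - q) * (1 / a - 1)) / (2 * s) - (0 - 1))
        / (s - (1 - p))) p := hden.log hh.ne'
  have := h1.sub h2
  refine this.congr_deriv (Eq.symm ?_)
  have hs0 : s ≠ 0 := hs_pos.ne'
  have hs_sq' : a * s ^ 2 = a * (1 - p) ^ 2 + 4 * p ^ 2 * q * (1 - q) * (1 - a) := by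
    rw [hs_sq]; field_simp
  field_simp
  linear_combination (-1) * hs_sq'
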